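/- With notation as before, the comatrix elements of A = (A''₄)* satisfy the commutation relations e₁₂e₁₁ = ξe₁₁e₁₂, e₂₁e₁₁ = ξe₁₁e₂₁, e₁₂e₂₂ = -ξe₂₂e₁₂, and e₂₁e₂₂ = -ξe₂₂e₂₁. -/

import Mathlib

/-!
Both sides of each relation are linear functionals, so it suffices to compare them on the basis
`gⁱ xʲ`. The elements `gⁱ` satisfy `Δ(gⁱ) = gⁱ ⊗ gⁱ` and `gⁱ x` is `(gⁱ, gⁱ⁺¹)`-skew primitive, so a
convolution `f * h` evaluates there to `f(gⁱ) h(gⁱ)`, resp. `f(gⁱx) h(gⁱ⁺¹) + f(gⁱ) h(gⁱx)`.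
Since `ρ(gⁱ)` is diagonal and `ρ(gⁱx)` antidiagonal, each side is then a monomial in `ξ`, and the
factor `±ξ` is the eigenvalue of `ρ(g)` picked up by the extra `g` in `gⁱ⁺¹`.
-/

open TensorProduct

/-- The convolution product on the dual of a coalgebra. -/
noncomputable def convProd (k : Type*) [CommRing k] {B : Type*} [AddCommGroup B] [Module k B]
    [Coalgebra k B] (f h : B →ₗ[k] k) : B →ₗ[k] k :=
  (LinearMap.mul' k k) ∘ₗ (TensorProduct.map f h) ∘ₗ Coalgebra.comul

section Convolution

variable {k B : Type*} [CommRing k] [AddCommGroup B] [Module k B] [Coalgebra k B]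

theorem convProd_apply_of_comul_eq_tmul {a u v : B} (ha : Coalgebra.comul (R := k) a = u ⊗ₜ v)
    (f h : B →ₗ[k] k) : convProd k f h a = f u * h v := by
  simp [convProd, ha]

theorem convProd_apply_of_comul_eq_tmul_add_tmul {a u v u' v' : B}
    (ha : Coalgebra.comul (R := k) a = u ⊗ₜ v + u' ⊗ₜ v') (f h : B →ₗ[k] k) :
    convProd k f h a = f u * h v + f u' * h v' := by
  simp [convProd, ha]

end Convolution

section SkewPrimitive

variable {k B : Type*} [CommSemiring k] [Semiring B] [Bialgebra k B] {g x : B}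

theorem comul_pow_of_comul_eq_tmul_self (hg : Coalgebra.comul (R := k) g = g ⊗ₜ g) (n : ℕ) :
    Coalgebra.comul (R := k) (g ^ n) = (g ^ n) ⊗ₜ (g ^ n) := by
  rw [Bialgebra.comul_pow, hg, Algebra.TensorProduct.tmul_pow]

theorem comul_pow_mul_of_comul_eq (hg : Coalgebra.comul (R := k) g = g ⊗ₜ g)
    (hx : Coalgebra.comul (R := k) x = x ⊗ₜ g + 1 ⊗ₜ x) (n : ℕ) :
    Coalgebra.comul (R := k) (g ^ n * x) =
      (g ^ n * x) ⊗ₜ (g ^ (n + 1)) + (g ^ n) ⊗ₜ (g ^ n * x) := by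
  rw [Bialgebra.comul_mul, comul_pow_of_comul_eq_tmul_self hg, hx, mul_add,
    Algebra.TensorProduct.tmul_mul_tmul, Algebra.TensorProduct.tmul_mul_tmul, mul_one, pow_succ]

end SkewPrimitive

theorem Module.Basis.ext_pow_mul_pow {k B M : Type*} [Semiring k] [Semiring B] [Module k B]
    [AddCommMonoid M] [Module k M] {m : ℕ} {g x : B} (b : Module.Basis (Fin m × Fin 2) k B)
    (hb : ∀ p : Fin m × Fin 2, b p = g ^ (p.1 : ℕ) * x ^ (p.2 : ℕ)) {f f' : B →ₗ[k] M}
    (hpow : ∀ n : ℕ, f (g ^ n) = f' (g ^ n)) (hpow_mul : ∀ n : ℕ, f (g ^ n * x) = f' (g ^ n * x)) :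
    f = f' := by
  refine b.ext fun ⟨i, j⟩ => ?_
  fin_cases j
  · simpa [hb] using hpow i
  · simpa [hb] using hpow_mul i

section Representation

variable {k B : Type*} [CommRing k] [Ring B] [Algebra k B] {a d c c' : k} {g x : B}
  {ρ : B →ₐ[k] Matrix (Fin 2) (Fin 2) k}

theorem map_pow_of_map_eq_diag (hρg : ρ g = !![a, 0; 0, d]) (n : ℕ) :
    ρ (g ^ n) = !![a ^ n, 0; 0, d ^ n] := by
  rw [map_pow, hρg, ← Matrix.diagonal_vec2, Matrix.diagonal_pow, ← Matrix.diagonal_vec2]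
  congr 1
  ext i; fin_cases i <;> rfl

theorem map_pow_mul_of_map_eq_antidiag (hρg : ρ g = !![a, 0; 0, d]) (hρx : ρ x = !![0, c; c', 0])
    (n : ℕ) : ρ (g ^ n * x) = !![0, a ^ n * c; d ^ n * c', 0] := by
  rw [map_mul, map_pow_of_map_eq_diag hρg, hρx]
  ext i j
  fin_cases i <;> fin_cases j <;> simp [Matrix.mul_apply, Fin.sum_univ_succ]

end Representation

theorem A4pp_dual_comatrix_commutation_general
    (k : Type*) [Field k]
    (ξ : k)
    (B : Type*) [Ring B] [Bialgebra k B]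
    (g x : B)
    (b : Module.Basis (Fin 4 × Fin 2) k B)
    (hb : ∀ p : Fin 4 × Fin 2, b p = g ^ (p.1 : ℕ) * x ^ (p.2 : ℕ))
    (hcg : Coalgebra.comul (R := k) g = g ⊗ₜ[k] g)
    (hcx : Coalgebra.comul (R := k) x = x ⊗ₜ[k] g + 1 ⊗ₜ[k] x)
    (ρ : B →ₐ[k] Matrix (Fin 2) (Fin 2) k)
    (hρg : ρ g = !![ξ, 0; 0, -ξ]) (hρx : ρ x = !![0, 2; -1, 0])
    (e : Fin 2 → Fin 2 → (B →ₗ[k] k))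
    (he : ∀ i j : Fin 2, ∀ a : B, e i j a = ρ a i j)
    :
    convProd k (e 0 1) (e 0 0) = ξ • convProd k (e 0 0) (e 0 1) ∧
    convProd k (e 1 0) (e 0 0) = ξ • convProd k (e 0 0) (e 1 0) ∧
    convProd k (e 0 1) (e 1 1) = (-ξ) • convProd k (e 1 1) (e 0 1) ∧
    convProd k (e 1 0) (e 1 1) = (-ξ) • convProd k (e 1 1) (e 1 0) := by
  have hpow (i j i' j' : Fin 2) (n : ℕ) :
      convProd k (e i j) (e i' j') (g ^ n) = ρ (g ^ n) i j * ρ (g ^ n) i' j' := by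
    rw [convProd_apply_of_comul_eq_tmul (comul_pow_of_comul_eq_tmul_self hcg n), he, he]
  have hpow_mul (i j i' j' : Fin 2) (n : ℕ) :
      convProd k (e i j) (e i' j') (g ^ n * x) =
        ρ (g ^ n * x) i j * ρ (g ^ (n + 1)) i' j' + ρ (g ^ n) i j * ρ (g ^ n * x) i' j' := by
    rw [convProd_apply_of_comul_eq_tmul_add_tmul (comul_pow_mul_of_comul_eq hcg hcx n),
      he, he, he, he]
  refine ⟨?_, ?_, ?_, ?_⟩ <;>
  · refine b.ext_pow_mul_pow hb (fun n => ?_) (fun n => ?_)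
    · simp [hpow, map_pow_of_map_eq_diag hρg]
    · simp [hpow_mul, map_pow_of_map_eq_diag hρg, map_pow_mul_of_map_eq_antidiag hρg hρx]
      ring

/-- The comatrix elements of `A = (A''₄)*` satisfy the commutation relations
`e₁₂e₁₁ = ξe₁₁e₁₂`, `e₂₁e₁₁ = ξe₁₁e₂₁`, `e₁₂e₂₂ = -ξe₂₂e₁₂` and `e₂₁e₂₂ = -ξe₂₂e₂₁`. -/
theorem A4pp_dual_comatrix_commutation
    (k : Type*) [Field k] [IsAlgClosed k] [CharZero k]
    (ξ : k) (hξ : IsPrimitiveRoot ξ 4)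
    (B : Type*) [Ring B] [Bialgebra k B]
    (g x : B) (hg : g ^ 4 = 1) (hx : x ^ 2 = g ^ 2 - 1) (hgx : g * x = -(x * g))
    (b : Module.Basis (Fin 4 × Fin 2) k B)
    (hb : ∀ p : Fin 4 × Fin 2, b p = g ^ (p.1 : ℕ) * x ^ (p.2 : ℕ))
    (hcg : Coalgebra.comul (R := k) g = g ⊗ₜ[k] g)
    (hcx : Coalgebra.comul (R := k) x = x ⊗ₜ[k] g + 1 ⊗ₜ[k] x)
    (ρ : B →ₐ[k] Matrix (Fin 2) (Fin 2) k)
    (hρg : ρ g = !![ξ, 0; 0, -ξ]) (hρx : ρ x = !![0, 2; -1, 0])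
    (e : Fin 2 → Fin 2 → (B →ₗ[k] k))
    (he : ∀ i j : Fin 2, ∀ a : B, e i j a = ρ a i j)
    :
    convProd k (e 0 1) (e 0 0) = ξ • convProd k (e 0 0) (e 0 1) ∧
    convProd k (e 1 0) (e 0 0) = ξ • convProd k (e 0 0) (e 1 0) ∧
    convProd k (e 0 1) (e 1 1) = (-ξ) • convProd k (e 1 1) (e 0 1) ∧
    convProd k (e 1 0) (e 1 1) = (-ξ) • convProd k (e 1 1) (e 1 0) :=
  A4pp_dual_comatrix_commutation_general k ξ B g x b hb hcg hcx ρ hρg hρx e he
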